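/- arXiv:2307.11833 — 2 statements merged into one kernel-verified Lean document; each statement's English description precedes it below -/
import Mathlib

section
/- Let f : ℝ → ℝ be continuous and integrable with integrable Fourier transform. Then for every ε > 0 and every compact set K ⊆ ℝ, there exist a natural number N, frequencies ω₁, …, ω_N ∈ ℝ, and real coefficients c₁, …, c_N and s₁, …, s_N such that sup_{x ∈ K} |f(x) − ∑_{n=1}^N (c_n cos(ω_n x) + s_n sin(ω_n x))| < ε. -/
/-!
By the product-to-sum formulas, the linear span of the waves `x ↦ cos (ω x)` and
`x ↦ sin (ω x)` (`ω ∈ ℝ`) restricted to `K` is closed under multiplication; it contains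
`cos (0 x) = 1` and separates points, since `d/dω sin (ω x) = x` at `ω = 0`. Stone–Weierstrass
makes this subalgebra dense in `C(K, ℝ)` for compact `K`, and its elements are exactly the
finite sine–cosine sums.
-/

open MeasureTheory Real
open scoped BigOperators Pointwise

lemma Submodule.mul_mem_span_of_mul_subset {R A : Type*} [CommSemiring R] [Semiring A]
    [Algebra R A] {s : Set A} (hs : s * s ⊆ Submodule.span R s) {a b : A}
    (ha : a ∈ Submodule.span R s) (hb : b ∈ Submodule.span R s) : a * b ∈ Submodule.span R s :=
  have hle : Submodule.span R s * Submodule.span R s ≤ Submodule.span R s := by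
    rwa [Submodule.span_mul_span, Submodule.span_le]
  hle (Submodule.mul_mem_mul ha hb)

section TrigSum

variable (K : Set ℝ)

noncomputable def cosWave (ω : ℝ) : C(K, ℝ) :=
  ⟨fun x => cos (ω * x), by fun_prop⟩

noncomputable def sinWave (ω : ℝ) : C(K, ℝ) :=
  ⟨fun x => sin (ω * x), by fun_prop⟩

def waves : Set C(K, ℝ) :=
  Set.range (cosWave K) ∪ Set.range (sinWave K)

variable {K}

@[simp]
lemma cosWave_apply (ω : ℝ) (x : K) : cosWave K ω x = cos (ω * x) := rfl

@[simp]
lemma sinWave_apply (ω : ℝ) (x : K) : sinWave K ω x = sin (ω * x) := rfl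

lemma cosWave_mem_span (ω : ℝ) : cosWave K ω ∈ Submodule.span ℝ (waves K) :=
  Submodule.subset_span (Or.inl ⟨ω, rfl⟩)

lemma sinWave_mem_span (ω : ℝ) : sinWave K ω ∈ Submodule.span ℝ (waves K) :=
  Submodule.subset_span (Or.inr ⟨ω, rfl⟩)

lemma cosWave_mul_cosWave (a b : ℝ) :
    cosWave K a * cosWave K b = (2⁻¹ : ℝ) • (cosWave K (a - b) + cosWave K (a + b)) := by
  ext x
  simp only [ContinuousMap.mul_apply, ContinuousMap.smul_apply, ContinuousMap.add_apply,
    cosWave_apply, smul_eq_mul, sub_mul, add_mul, cos_sub, cos_add]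
  ring

lemma cosWave_mul_sinWave (a b : ℝ) :
    cosWave K a * sinWave K b = (2⁻¹ : ℝ) • (sinWave K (a + b) - sinWave K (a - b)) := by
  ext x
  simp only [ContinuousMap.mul_apply, ContinuousMap.smul_apply, ContinuousMap.sub_apply,
    cosWave_apply, sinWave_apply, smul_eq_mul, sub_mul, add_mul, sin_sub, sin_add]
  ring

lemma sinWave_mul_sinWave (a b : ℝ) :
    sinWave K a * sinWave K b = (2⁻¹ : ℝ) • (cosWave K (a - b) - cosWave K (a + b)) := by
  ext x
  simp only [ContinuousMap.mul_apply, ContinuousMap.smul_apply, ContinuousMap.sub_apply,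
    cosWave_apply, sinWave_apply, smul_eq_mul, sub_mul, add_mul, cos_sub, cos_add]
  ring

lemma mul_subset_span_waves : waves K * waves K ⊆ Submodule.span ℝ (waves K) := by
  rw [Set.mul_subset_iff]
  rintro _ (⟨a, rfl⟩ | ⟨a, rfl⟩) _ (⟨b, rfl⟩ | ⟨b, rfl⟩)
  · rw [cosWave_mul_cosWave]
    exact Submodule.smul_mem _ _ (add_mem (cosWave_mem_span _) (cosWave_mem_span _))
  · rw [cosWave_mul_sinWave]
    exact Submodule.smul_mem _ _ (sub_mem (sinWave_mem_span _) (sinWave_mem_span _))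
  · rw [mul_comm, cosWave_mul_sinWave]
    exact Submodule.smul_mem _ _ (sub_mem (sinWave_mem_span _) (sinWave_mem_span _))
  · rw [sinWave_mul_sinWave]
    exact Submodule.smul_mem _ _ (sub_mem (cosWave_mem_span _) (cosWave_mem_span _))

lemma one_mem_span_waves : (1 : C(K, ℝ)) ∈ Submodule.span ℝ (waves K) := by
  convert cosWave_mem_span (K := K) 0
  ext x
  simp

variable (K) in
noncomputable def trigSubalgebra : Subalgebra ℝ C(K, ℝ) :=
  (Submodule.span ℝ (waves K)).toSubalgebra one_mem_span_waves
    fun _ _ => Submodule.mul_mem_span_of_mul_subset mul_subset_span_waves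

lemma hasDerivAt_sin_mul_zero (x : ℝ) : HasDerivAt (fun ω => sin (ω * x)) x 0 := by
  simpa using (hasDerivAt_mul_const x).sin (x := 0)

lemma trigSubalgebra_separatesPoints : (trigSubalgebra K).SeparatesPoints := by
  intro x y hxy
  by_contra! hsame
  have hsin : (fun ω => sin (ω * x)) = fun ω => sin (ω * y) := funext fun ω =>
    hsame _ ⟨sinWave K ω, sinWave_mem_span ω, rfl⟩
  have hderiv := hasDerivAt_sin_mul_zero (x : ℝ)
  rw [hsin] at hderiv
  exact hxy (Subtype.ext ((hasDerivAt_sin_mul_zero (y : ℝ)).unique hderiv).symm)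

lemma exists_cos_add_sin_of_mem_waves {g : C(K, ℝ)} (hg : g ∈ waves K) :
    ∃ ω p q : ℝ, ∀ x : K, g x = p * cos (ω * x) + q * sin (ω * x) := by
  rcases hg with ⟨ω, rfl⟩ | ⟨ω, rfl⟩
  · exact ⟨ω, 1, 0, fun x => by simp⟩
  · exact ⟨ω, 0, 1, fun x => by simp⟩

lemma exists_trigSum_of_mem_span {g : C(K, ℝ)} (hg : g ∈ Submodule.span ℝ (waves K)) :
    ∃ (N : ℕ) (ω : Fin N → ℝ) (c s : Fin N → ℝ), ∀ x : K,
      g x = ∑ n : Fin N, (c n * cos (ω n * x) + s n * sin (ω n * x)) := by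
  obtain ⟨N, a, w, rfl⟩ := Submodule.mem_span_set'.mp hg
  choose ω p q hw using fun n => exists_cos_add_sin_of_mem_waves (w n).2
  refine ⟨N, ω, fun n => a n * p n, fun n => a n * q n, fun x => ?_⟩
  simp only [ContinuousMap.coe_sum, ContinuousMap.coe_smul, Finset.sum_apply, Pi.smul_apply,
    hw, smul_eq_mul]
  exact Finset.sum_congr rfl fun n _ => by ring

end TrigSum

theorem wavelet_riemann_sum_approximation_general
    (f : ℝ → ℝ) (hf : Continuous f)
    (ε : ℝ) (hε : 0 < ε) (K : Set ℝ) (hK : IsCompact K) :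
    ∃ (N : ℕ) (ω : Fin N → ℝ) (c s : Fin N → ℝ),
      ∀ x ∈ K,
        |f x - ∑ n : Fin N, (c n * Real.cos (ω n * x) + s n * Real.sin (ω n * x))| < ε := by
  have : CompactSpace K := isCompact_iff_compactSpace.mp hK
  obtain ⟨⟨g, hg⟩, hgf⟩ :=
    ContinuousMap.exists_mem_subalgebra_near_continuous_of_separatesPoints (trigSubalgebra K)
      trigSubalgebra_separatesPoints (fun x : K => f x) (by fun_prop) ε hε
  obtain ⟨N, ω, c, s, hgs⟩ := exists_trigSum_of_mem_span hg
  refine ⟨N, ω, c, s, fun x hx => ?_⟩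
  rw [abs_sub_comm, ← hgs ⟨x, hx⟩]
  exact hgf ⟨x, hx⟩

/-- Quantitative conclusion of Proposition 1: a continuous integrable function with
integrable Fourier transform can be uniformly approximated on any compact set by a finite
sine–cosine sum (the output of a finite-width Wavelet-activated network). -/
theorem wavelet_riemann_sum_approximation
    (f : ℝ → ℝ) (hf : Continuous f) (hfi : Integrable f)
    (hFi : Integrable (fun ω : ℝ => ∫ t : ℝ, (f t : ℂ) * Complex.exp (-(Complex.I * ω * t))))
    (ε : ℝ) (hε : 0 < ε) (K : Set ℝ) (hK : IsCompact K) :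
    ∃ (N : ℕ) (ω : Fin N → ℝ) (c s : Fin N → ℝ),
      ∀ x ∈ K,
        |f x - ∑ n : Fin N, (c n * Real.cos (ω n * x) + s n * Real.sin (ω n * x))| < ε :=
  wavelet_riemann_sum_approximation_general f hf ε hε K hK
end

section
/- Fix distinct points x₁, …, x_m in ℝ^d and target values y₁, …, y_m in ℝ. Then there exist a natural number N, frequency vectors w₁, …, w_N ∈ ℝ^d, and real coefficients a₁, …, a_N and b₁, …, b_N such that for every i, ∑_{j=1}^N (a_j sin(⟨w_j, x_i⟩) + b_j cos(⟨w_j, x_i⟩)) = y_i; that is, a finite-width two-hidden-layer network with the Wavelet activation can exactly interpolate any finite dataset. -/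
/-!
The functions `w ↦ exp (i ⟪w, xᵢ⟫)` are additive characters of the frequency space, pairwise
distinct because the points are, hence linearly independent over `ℂ` by Dedekind's lemma.
Taking real and imaginary parts, no nonzero `c ∈ ℝᵐ` is orthogonal to all the vectors
`(sin ⟪w, xᵢ⟫)ᵢ` and `(cos ⟪w, xᵢ⟫)ᵢ`, so these span `ℝᵐ`. Since the outputs
`a sin ⟪w, ·⟫ + b cos ⟪w, ·⟫` of single units are closed under scaling, every target vector is a
finite sum of them.
-/

open scoped RealInnerProductSpace

open Complex Function Submodule

section

variable {E ι : Type*} [NormedAddCommGroup E] [InnerProductSpace ℝ E]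

noncomputable def expInnerChar (x : E) : AddChar E ℂ where
  toFun w := exp (⟪w, x⟫ * I)
  map_zero_eq_one' := by simp
  map_add_eq_mul' w w' := by rw [inner_add_left, ofReal_add, add_mul, exp_add]

theorem expInnerChar_injective : Injective (expInnerChar (E := E)) := by
  intro x x' h
  by_contra hne
  have hz : 0 < ‖x - x'‖ ^ 2 := by positivity [sub_ne_zero.2 hne]
  -- At the frequency `w` below the two characters differ by the factor `exp (π I) = -1`.
  set w : E := (Real.pi / ‖x - x'‖ ^ 2) • (x - x')
  have hphase : ⟪w, x⟫ = ⟪w, x'⟫ + Real.pi := by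
    rw [← sub_eq_iff_eq_add', ← inner_sub_right, real_inner_smul_left, real_inner_self_eq_norm_sq,
      div_mul_cancel₀ _ hz.ne']
  have hw : expInnerChar x w = expInnerChar x' w := by rw [h]
  simp only [expInnerChar, AddChar.coe_mk, hphase, ofReal_add, add_mul, exp_add,
    exp_pi_mul_I] at hw
  exact exp_ne_zero _ (by linear_combination -hw / 2)

theorem linearIndependent_expInnerChar {x : ι → E} (hx : Injective x) :
    LinearIndependent ℂ (fun i => (expInnerChar (x i) : E → ℂ)) :=
  (linearIndependent_monoidHom (Multiplicative E) ℂ).comp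
    (fun i => (expInnerChar (x i)).toMonoidHom)
    (AddChar.toMonoidHomEquiv.injective.comp (expInnerChar_injective.comp hx))

variable [Fintype ι]

theorem eq_zero_of_forall_sum_mul_sin_cos_eq_zero {x : ι → E} (hx : Injective x) {c : ι → ℝ}
    (hsin : ∀ w, ∑ i, c i * Real.sin ⟪w, x i⟫ = 0)
    (hcos : ∀ w, ∑ i, c i * Real.cos ⟪w, x i⟫ = 0) : c = 0 := by
  have hexp : ∑ i, (c i : ℂ) • (expInnerChar (x i) : E → ℂ) = 0 := by
    funext w
    have hre := congrArg ((↑) : ℝ → ℂ) (hcos w)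
    have him := congrArg ((↑) : ℝ → ℂ) (hsin w)
    push_cast at hre him
    simp only [Finset.sum_apply, Pi.smul_apply, smul_eq_mul, expInnerChar, AddChar.coe_mk,
      exp_mul_I, Pi.zero_apply, mul_add, ← mul_assoc, Finset.sum_add_distrib, ← Finset.sum_mul,
      hre, him, zero_mul, add_zero]
  ext i
  exact_mod_cast Fintype.linearIndependent_iff.1 (linearIndependent_expInnerChar hx) _ hexp i

noncomputable def trigNeuron (x : ι → E) (w : E) (a b : ℝ) : ι → ℝ :=
  fun i => a * Real.sin ⟪w, x i⟫ + b * Real.cos ⟪w, x i⟫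

theorem span_range_trigNeuron {x : ι → E} (hx : Injective x) :
    span ℝ (Set.range fun p : E × ℝ × ℝ => trigNeuron x p.1 p.2.1 p.2.2) = ⊤ := by
  classical
  rw [← dualAnnihilator_eq_bot_iff, eq_bot_iff]
  intro f hf
  have hvanish (w : E) (a b : ℝ) : f (trigNeuron x w a b) = 0 :=
    (mem_dualAnnihilator f).1 hf _ (subset_span ⟨(w, a, b), rfl⟩)
  set c : ι → ℝ := fun i => f (Pi.single i 1)
  have hf_apply (v : ι → ℝ) : f v = ∑ i, c i * v i := by
    conv_lhs => rw [pi_eq_sum_univ' v]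
    simp [c, mul_comm]
  have hc : c = 0 := eq_zero_of_forall_sum_mul_sin_cos_eq_zero hx
    (fun w => by simpa [hf_apply, trigNeuron] using hvanish w 1 0)
    (fun w => by simpa [hf_apply, trigNeuron] using hvanish w 0 1)
  ext v
  simp [hf_apply, hc]

theorem exists_sum_trigNeuron_eq {x : ι → E} (hx : Injective x) (y : ι → ℝ) :
    ∃ (N : ℕ) (w : Fin N → E) (a b : Fin N → ℝ), ∑ j, trigNeuron x (w j) (a j) (b j) = y := by
  obtain ⟨N, c, g, hg⟩ := mem_span_set'.1 ((span_range_trigNeuron hx).ge (mem_top (x := y)))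
  choose p hp using fun j => (g j).2
  refine ⟨N, fun j => (p j).1, fun j => c j * (p j).2.1, fun j => c j * (p j).2.2, ?_⟩
  rw [← hg]
  refine Finset.sum_congr rfl fun j _ => ?_
  rw [← hp]
  ext i
  simp only [trigNeuron, Pi.smul_apply, smul_eq_mul]
  ring

end

/-- A finite-width two-hidden-layer Wavelet-activated network (a finite sum of sines and
cosines of linear functionals) can exactly interpolate any finite dataset of distinct
points with arbitrary target values. -/
theorem wavelet_finite_interpolation
    (d m : ℕ) (x : Fin m → EuclideanSpace ℝ (Fin d)) (hx : Function.Injective x)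
    (y : Fin m → ℝ) :
    ∃ (N : ℕ) (w : Fin N → EuclideanSpace ℝ (Fin d)) (a b : Fin N → ℝ),
      ∀ i : Fin m,
        ∑ j : Fin N, (a j * Real.sin ⟪w j, x i⟫ + b j * Real.cos ⟪w j, x i⟫) = y i := by
  obtain ⟨N, w, a, b, hsum⟩ := exists_sum_trigNeuron_eq hx y
  refine ⟨N, w, a, b, fun i => ?_⟩
  simpa [trigNeuron] using congrFun hsum i
end
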